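/- arXiv:0906.3901 — 2 statements merged into one kernel-verified Lean document; each statement's English description precedes it below -/
import Mathlib

section
/- With the notation above: the map induced by φ from coker(1 - β₀) = V₀ / (1-β₀)(W₀) to coker(1 - ~α⁻¹) = (V/I) / (1 - ~α⁻¹)(V/I) is a group isomorphism. -/
open Finsupp

/-- The shift automorphism `(α f)(n) = f (n-1)` on finitely supported functions `ℤ →₀ M`. -/
noncomputable def sh (M : Type*) [AddCommGroup M] : AddAut (ℤ →₀ M) :=
  (Finsupp.domCongr (Equiv.addRight (1:ℤ)) : (ℤ →₀ M) ≃+ (ℤ →₀ M))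

/-- The sum-of-coordinates map `E : (ℤ →₀ M) → M`. -/
noncomputable def Esum (M : Type*) [AddCommGroup M] : (ℤ →₀ M) →+ M :=
  Finsupp.liftAddHom fun _ => AddMonoidHom.id M

/-- The inclusion `φ : M → (ℤ →₀ M)` at coordinate `0`. -/
noncomputable def phi (M : Type*) [AddCommGroup M] : M →+ (ℤ →₀ M) :=
  Finsupp.singleAddHom (0:ℤ)

/-- The projection `e_i` onto coordinate `i`. -/
noncomputable def eproj (M : Type*) [AddCommGroup M] (i : ℤ) : (ℤ →₀ M) →+ (ℤ →₀ M) :=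
  (Finsupp.singleAddHom i).comp (Finsupp.applyAddHom i)

/-- `q_i = ∑_{j ≤ i} e_j` : restriction to coordinates `≤ i`. -/
noncomputable def qproj (M : Type*) [AddCommGroup M] (i : ℤ) : (ℤ →₀ M) →+ (ℤ →₀ M) :=
  Finsupp.filterAddHom (fun j => j ≤ i)

section
variable {V₀ : Type*} [AddCommGroup V₀] (W₀ : AddSubgroup V₀) (β₀ : W₀ →+ V₀)

/-- The inclusion of `W = ℤ →₀ W₀` into `V = ℤ →₀ V₀`. -/
noncomputable def iota : (ℤ →₀ W₀) →+ (ℤ →₀ V₀) :=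
  Finsupp.mapRange.addMonoidHom W₀.subtype

/-- `β : W → V`, applying `β₀` coordinatewise. -/
noncomputable def betaMap : (ℤ →₀ W₀) →+ (ℤ →₀ V₀) :=
  Finsupp.mapRange.addMonoidHom β₀

/-- `(1 - αβ) : W → V`. -/
noncomputable def oneSubAlphaBeta : (ℤ →₀ W₀) →+ (ℤ →₀ V₀) :=
  iota W₀ - ((sh V₀).toAddMonoidHom.comp (betaMap W₀ β₀))

/-- `I = (1 - αβ)(W) ⊆ V`. -/
noncomputable def Isub : AddSubgroup (ℤ →₀ V₀) :=
  (oneSubAlphaBeta W₀ β₀).range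

end

/-!
Summing coordinates `E : V → V₀` is a retraction of `φ`, and its kernel is exactly the range
`R` of `1 - α⁻¹`: `E` is `α`-invariant, and conversely `g - φ (E g) ∈ R` by telescoping
`single a b - single 0 b` into steps `single (n+1) b - single n b = (1 - α⁻¹) (single (n+1) b)`.
The kernel of `V → (V/I)/(1 - ~α⁻¹)(V/I)` is `R ⊔ I = ker E ⊔ I`, so the composite with `φ` is
onto (every `g` is congruent to `φ (E g)`) and its kernel is `φ⁻¹(ker E ⊔ I) = E(I)`.
Finally `E ∘ (1 - αβ) = (1 - β₀) ∘ E`, so `E(I) = (1 - β₀)(W₀)`.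
-/

theorem AddSubgroup.comap_sup_ker_eq_map_of_comp_eq_id {G H : Type*} [AddGroup G] [AddGroup H]
    {E : G →+ H} {φ : H →+ G} (hEφ : E.comp φ = AddMonoidHom.id H) (J : AddSubgroup G) :
    (J ⊔ E.ker).comap φ = J.map E := by
  rw [← AddSubgroup.comap_map_eq, AddSubgroup.comap_comap, hEφ, AddSubgroup.comap_id]

theorem AddMonoidHom.surjective_comp_of_comp_eq_id {G H Q : Type*} [AddGroup G] [AddGroup H]
    [AddGroup Q] {f : G →+ Q} {E : G →+ H} {φ : H →+ G} (hf : Function.Surjective f)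
    (hEφ : E.comp φ = AddMonoidHom.id H) (hker : E.ker ≤ f.ker) :
    Function.Surjective (f.comp φ) := by
  intro y
  obtain ⟨g, rfl⟩ := hf y
  have hg : g - φ (E g) ∈ E.ker := by
    rw [AddMonoidHom.mem_ker, map_sub, ← AddMonoidHom.comp_apply, hEφ,
      AddMonoidHom.id_apply, sub_self]
  have hfg := AddMonoidHom.mem_ker.mp (hker hg)
  rw [map_sub, sub_eq_zero] at hfg
  exact ⟨E g, hfg.symm⟩

theorem QuotientAddGroup.ker_mk'_map_comp_mk' {G : Type*} [AddCommGroup G]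
    (I H : AddSubgroup G) :
    ((QuotientAddGroup.mk' (H.map (QuotientAddGroup.mk' I))).comp
      (QuotientAddGroup.mk' I)).ker = H ⊔ I := by
  rw [← AddMonoidHom.comap_ker, QuotientAddGroup.ker_mk', AddSubgroup.comap_map_eq,
    QuotientAddGroup.ker_mk']

section Shift
variable {M : Type*} [AddCommGroup M]

@[simp]
theorem Esum_single (a : ℤ) (b : M) : Esum M (single a b) = b := by
  simp [Esum]

theorem Esum_comp_phi : (Esum M).comp (phi M) = AddMonoidHom.id M := by
  ext b
  simp [phi]

theorem Esum_surjective : Function.Surjective (Esum M) :=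
  fun b => ⟨phi M b, DFunLike.congr_fun Esum_comp_phi b⟩

@[simp]
theorem sh_single (a : ℤ) (b : M) : sh M (single a b) = single (a + 1) b := by
  simp [sh, Finsupp.equivMapDomain_single]

theorem sh_neg_single (a : ℤ) (b : M) :
    (-(sh M) : AddAut (ℤ →₀ M)) (single a b) = single (a - 1) b := by
  rw [show (single a b : ℤ →₀ M) = sh M (single (a - 1) b) by rw [sh_single, sub_add_cancel]]
  exact AddAut.neg_apply_self _ (sh M) _

theorem Esum_sh_neg (v : ℤ →₀ M) :
    Esum M ((-(sh M) : AddAut (ℤ →₀ M)) v) = Esum M v := by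
  induction v using Finsupp.induction_linear with
  | zero => simp
  | add f g hf hg => simp only [map_add, hf, hg]
  | single a b => rw [sh_neg_single, Esum_single, Esum_single]

noncomputable abbrev oneSubShNeg (M : Type*) [AddCommGroup M] : (ℤ →₀ M) →+ (ℤ →₀ M) :=
  AddMonoidHom.id (ℤ →₀ M) - (-(sh M) : AddAut (ℤ →₀ M)).toAddMonoidHom

theorem oneSubShNeg_single (a : ℤ) (b : M) :
    oneSubShNeg M (single (a + 1) b) = single (a + 1) b - single a b := by
  simp only [oneSubShNeg, AddMonoidHom.sub_apply, AddMonoidHom.id_apply,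
    AddEquiv.toAddMonoidHom_eq_coe, AddMonoidHom.coe_coe, sh_neg_single, add_sub_cancel_right]

theorem single_sub_single_zero_mem_range (a : ℤ) (b : M) :
    single a b - single 0 b ∈ (oneSubShNeg M).range := by
  induction a using Int.induction_on with
  | zero => simp
  | succ n ih =>
    have hstep : single ((n : ℤ) + 1) b - single (n : ℤ) b ∈ (oneSubShNeg M).range :=
      ⟨_, oneSubShNeg_single _ b⟩
    simpa using add_mem hstep ih
  | pred n ih =>
    have hstep : single (-(n : ℤ) - 1 + 1) b - single (-(n : ℤ) - 1) b ∈ (oneSubShNeg M).range :=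
      ⟨_, oneSubShNeg_single _ b⟩
    rw [sub_add_cancel] at hstep
    simpa using sub_mem ih hstep

theorem range_oneSubShNeg : (oneSubShNeg M).range = (Esum M).ker := by
  apply le_antisymm
  · rintro _ ⟨g, rfl⟩
    simp only [oneSubShNeg, AddMonoidHom.mem_ker, AddMonoidHom.sub_apply, AddMonoidHom.id_apply,
      AddEquiv.toAddMonoidHom_eq_coe, AddMonoidHom.coe_coe, map_sub, Esum_sh_neg, sub_self]
  · intro g hg
    have hsub : g - phi M (Esum M g) ∈ (oneSubShNeg M).range := by
      clear hg
      induction g using Finsupp.induction_linear with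
      | zero => simp
      | add f g hf hg => simpa [add_sub_add_comm] using add_mem hf hg
      | single a b => simpa [phi] using single_sub_single_zero_mem_range a b
    simpa [AddMonoidHom.mem_ker.mp hg] using hsub

end Shift

section Twisted
variable {V₀ : Type*} [AddCommGroup V₀] (W₀ : AddSubgroup V₀) (β₀ : W₀ →+ V₀)

theorem Esum_comp_oneSubAlphaBeta :
    (Esum V₀).comp (oneSubAlphaBeta W₀ β₀) = (W₀.subtype - β₀).comp (Esum W₀) := by
  ext a b
  simp [oneSubAlphaBeta, iota, betaMap]

theorem map_Esum_Isub : (Isub W₀ β₀).map (Esum V₀) = (W₀.subtype - β₀).range := by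
  rw [Isub, AddMonoidHom.map_range, Esum_comp_oneSubAlphaBeta, AddMonoidHom.range_comp,
    AddMonoidHom.range_eq_top_of_surjective _ Esum_surjective, ← AddMonoidHom.range_eq_map]

end Twisted

/-- The map induced by phi from coker(1 - beta0) to coker(1 - alpha-tilde inverse) is an
isomorphism: the composite V0 -> V/I -> (V/I)/(1-alpha-tilde inverse)(V/I) is surjective
with kernel exactly (1 - beta0)(W0). -/
theorem stmt6 {V₀ : Type*} [AddCommGroup V₀] (W₀ : AddSubgroup V₀) (β₀ : W₀ →+ V₀) :
    Function.Surjective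
      ((QuotientAddGroup.mk'
          (((AddMonoidHom.id (ℤ →₀ V₀)
              - (-(sh V₀) : AddAut (ℤ →₀ V₀)).toAddMonoidHom).range).map
            (QuotientAddGroup.mk' (Isub W₀ β₀)))).comp
        ((QuotientAddGroup.mk' (Isub W₀ β₀)).comp (phi V₀))) ∧
    ((QuotientAddGroup.mk'
          (((AddMonoidHom.id (ℤ →₀ V₀)
              - (-(sh V₀) : AddAut (ℤ →₀ V₀)).toAddMonoidHom).range).map
            (QuotientAddGroup.mk' (Isub W₀ β₀)))).comp
        ((QuotientAddGroup.mk' (Isub W₀ β₀)).comp (phi V₀))).ker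
      = (W₀.subtype - β₀).range := by
  have hker : ((QuotientAddGroup.mk' ((oneSubShNeg V₀).range.map
      (QuotientAddGroup.mk' (Isub W₀ β₀)))).comp (QuotientAddGroup.mk' (Isub W₀ β₀))).ker
      = (Esum V₀).ker ⊔ Isub W₀ β₀ := by
    rw [QuotientAddGroup.ker_mk'_map_comp_mk', range_oneSubShNeg]
  rw [← AddMonoidHom.comp_assoc]
  refine ⟨?_, ?_⟩
  · exact AddMonoidHom.surjective_comp_of_comp_eq_id
      ((QuotientAddGroup.mk'_surjective _).comp (QuotientAddGroup.mk'_surjective _))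
      Esum_comp_phi (le_sup_left.trans hker.ge)
  · rw [← AddMonoidHom.comap_ker, hker, sup_comm,
      AddSubgroup.comap_sup_ker_eq_map_of_comp_eq_id Esum_comp_phi, map_Esum_Isub]
end

section
/- Let V₀, W₀, β₀, V, W, α, β as above, and suppose g ∈ V, h ∈ W satisfy (1 - α⁻¹)g = (1 - αβ)h. Then for all integers m < n: α^{-m} q_m(g) - α^{-n} q_n(g) = Σ_{j=m}^{n-1} α^{-j} e_j(h) + (1 - αβ)( Σ_{j=m}^{n-1} α^{-j} q_{j-1}(h) ), where e_j is the projection onto coordinate j and q_j = Σ_{i ≤ j} e_i. -/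
/-!
Read coordinatewise, the hypothesis says `g b - g (b + 1) = h b - β₀ (h (b - 1))` for every `b`.
Evaluating at coordinate `a` of `α^{-k}`-shifted vectors, the one-step difference
`α^{-k} q_k g - α^{-(k+1)} q_{k+1} g` is `g (a + k) - g (a + k + 1)` for `a ≤ 0` and `0` otherwise,
which by the hypothesis is exactly `α^{-k} e_k h + (1 - αβ)(α^{-k} q_{k-1} h)` at `a`.
Summing this one-step identity over `k ∈ [m, n)` telescopes to the claim.
-/

open Finsupp

open Finset

lemma Finset.sum_Ico_sub_add_one {G : Type*} [AddCommGroup G] (f : ℤ → G) {m n : ℤ}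
    (hmn : m ≤ n) : ∑ i ∈ Ico m n, (f i - f (i + 1)) = f m - f n := by
  induction n, hmn using Int.leInduction with
  | base => simp
  | succ n hmn ih =>
    rw [← sum_Ico_add_eq_sum_Ico_add_one hmn, ih]
    abel

section

variable {M : Type*} [AddCommGroup M]

lemma sh_apply (f : ℤ →₀ M) (a : ℤ) : sh M f a = f (a - 1) := by
  simp [sh, sub_eq_add_neg]

lemma neg_sh_apply (f : ℤ →₀ M) (a : ℤ) : (-sh M) f a = f (a + 1) := by
  simp [sh, AddAut.neg_def]

lemma zsmul_sh_apply (k : ℤ) (f : ℤ →₀ M) (a : ℤ) : ((k • sh M) f) a = f (a - k) := by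
  induction k using Int.induction_on generalizing f a with
  | zero => simp
  | succ k ih =>
    rw [add_one_zsmul, AddAut.add_apply, ih, sh_apply, sub_sub]
  | pred k ih =>
    rw [sub_one_zsmul, sub_eq_add_neg, AddAut.add_apply, ih, neg_sh_apply]
    congr 1
    ring

lemma qproj_apply (i : ℤ) (f : ℤ →₀ M) (a : ℤ) :
    qproj M i f a = if a ≤ i then f a else 0 :=
  Finsupp.filter_apply _ _ _

lemma eproj_apply (i : ℤ) (f : ℤ →₀ M) (a : ℤ) :
    eproj M i f a = if i = a then f i else 0 :=
  Finsupp.single_apply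

variable {V₀ : Type*} [AddCommGroup V₀] {W₀ : AddSubgroup V₀}

lemma iota_apply (f : ℤ →₀ W₀) (a : ℤ) : iota W₀ f a = f a := rfl

lemma oneSubAlphaBeta_apply (β₀ : W₀ →+ V₀) (f : ℤ →₀ W₀) (a : ℤ) :
    oneSubAlphaBeta W₀ β₀ f a = f a - β₀ (f (a - 1)) := by
  simp [oneSubAlphaBeta, iota, betaMap, sh_apply]

end

section

variable {V₀ : Type*} [AddCommGroup V₀] {W₀ : AddSubgroup V₀} {β₀ : W₀ →+ V₀}
  {g : ℤ →₀ V₀} {h : ℤ →₀ W₀}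

lemma apply_sub_apply_add_one_of_eq (hyp : g - (-(sh V₀)) g = oneSubAlphaBeta W₀ β₀ h) (b : ℤ) :
    g b - g (b + 1) = h b - β₀ (h (b - 1)) := by
  have hb := DFunLike.congr_fun hyp b
  rwa [Finsupp.sub_apply, neg_sh_apply, oneSubAlphaBeta_apply] at hb

lemma shifted_qproj_sub_shifted_qproj_succ_of_eq
    (hyp : g - (-(sh V₀)) g = oneSubAlphaBeta W₀ β₀ h) (k : ℤ) :
    ((-k) • sh V₀) (qproj V₀ k g) - ((-(k + 1)) • sh V₀) (qproj V₀ (k + 1) g)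
      = ((-k) • sh V₀) (iota W₀ (eproj W₀ k h))
        + oneSubAlphaBeta W₀ β₀ (((-k) • sh W₀) (qproj W₀ (k - 1) h)) := by
  ext a
  simp only [Finsupp.sub_apply, Finsupp.add_apply, zsmul_sh_apply, oneSubAlphaBeta_apply,
    qproj_apply, eproj_apply, iota_apply, sub_neg_eq_add]
  rw [← add_assoc, sub_add_eq_add_sub]
  have hb := apply_sub_apply_add_one_of_eq hyp (a + k)
  split_ifs <;> first | omega | skip
  · rw [hb, ← ‹k = a + k›]
    simp [sub_eq_add_neg]
  · rw [hb]
    simp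
  · simp

end

/-- Summed telescoping identity for m < n. -/
theorem stmt7 {V₀ : Type*} [AddCommGroup V₀] (W₀ : AddSubgroup V₀) (β₀ : W₀ →+ V₀)
    (g : ℤ →₀ V₀) (h : ℤ →₀ W₀)
    (hyp : g - (-(sh V₀)) g = oneSubAlphaBeta W₀ β₀ h)
    (m n : ℤ) (hmn : m < n) :
    ((-m) • sh V₀) (qproj V₀ m g) - ((-n) • sh V₀) (qproj V₀ n g)
      = (∑ j ∈ Finset.Ico m n, ((-j) • sh V₀) (iota W₀ (eproj W₀ j h)))
        + oneSubAlphaBeta W₀ β₀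
            (∑ j ∈ Finset.Ico m n, ((-j) • sh W₀) (qproj W₀ (j-1) h)) := by
  rw [map_sum, ← sum_add_distrib,
    ← sum_Ico_sub_add_one (fun k => ((-k) • sh V₀) (qproj V₀ k g)) hmn.le]
  exact sum_congr rfl fun k _ => shifted_qproj_sub_shifted_qproj_succ_of_eq hyp k
end
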